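/- Fix p₀₁, p₁₀ ∈ (0,1) with p₀₁ + p₁₀ ≤ 1 and p₀₁ ≥ (1−p₁₀)²/(2−p₁₀). Set h₃ = (1−p₁₀)·(p₁₀ + (p₁₀+p₀₁)(1−p₁₀)). Then the rate region Λ_s(p₀₁, p₁₀) equals the set of all pairs (r₁, r₂) with r₁ ≥ 0 and r₂ ≥ 0 satisfying: p₀₁·r₁ + h₃·r₂ ≤ h₃·p₀₁/(p₁₀+p₀₁); r₁ + r₂ ≤ 1 − p₁₀²/(p₁₀+p₀₁)² − p₁₀p₀₁/(p₀₁+p₁₀); h₃·r₁ + p₀₁·r₂ ≤ h₃·p₀₁/(p₁₀+p₀₁). -/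

import Mathlib

/-!
The claimed region is the polygon with vertices `0`, `(π, 0)`, `v`, `v.swap`, `(0, π)`, where
`π = p₀₁ / (p₁₀ + p₀₁)` is the stationary ON-probability of a channel and `v` is the rate pair of
the myopic policy. Each vertex is the rate pair of a deterministic stationary policy, whose
stationary distribution is a point of `X`; since the rate region is convex, it contains the
polygon. Conversely each facet is an average-reward bound, certified by LP duality: a relative
value function `h` with `r(s,a) + E[h(s') | s, a] ≤ g + h(s)` for every state-action pair bounds
the reward of every point of `X` by `g`. The slacks of these Bellman inequalities are visibly
nonnegative polynomials once `p₀₁ + p₁₀ ≤ 1` and `(1 - p₁₀)² ≤ p₀₁ (2 - p₁₀)`, which is where the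
hypotheses enter. Exchanging the two queues (server location and channels) is a symmetry of the
model; it yields the third facet from the first and the vertices `v.swap`, `(0, π)` from `v`,
`(π, 0)`.
-/

open Finset

/-- State of the Gilbert–Elliot two-queue model:
`(m, c₁, c₂)` where `m = true` means the server is at queue 1,
and `cᵢ = true` means channel `i` is ON. -/
abbrev GEState : Type := Bool × Bool × Bool

/-- One-step channel transition for the (possibly non-symmetric) Gilbert–Elliot channel:
from ON the channel moves to OFF with probability `p₁₀`, from OFF it moves to ON with
probability `p₀₁`. -/
noncomputable def chTrans (p01 p10 : ℝ) (c c' : Bool) : ℝ :=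
  if c then (if c' then 1 - p10 else p10) else (if c' then p01 else 1 - p01)

/-- Transition probability of going to state `s'` from state `s` under action `a`
(`a = true` means "stay", `a = false` means "switch"). -/
noncomputable def GEP (p01 p10 : ℝ) (s' s : GEState) (a : Bool) : ℝ :=
  (if s'.1 = (if a then s.1 else !s.1) then (1 : ℝ) else 0) *
    chTrans p01 p10 s.2.1 s'.2.1 * chTrans p01 p10 s.2.2 s'.2.2

/-- The state-action polytope `X(p₀₁, p₁₀)`. -/
def GEX (p01 p10 : ℝ) : Set (GEState × Bool → ℝ) :=
  {x | (∀ sa, 0 ≤ x sa) ∧ (∑ sa : GEState × Bool, x sa) = 1 ∧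
    ∀ s : GEState, (∑ a : Bool, x (s, a)) =
      ∑ s' : GEState, ∑ a : Bool, GEP p01 p10 s s' a * x (s', a)}

/-- Rate of queue 1: frequency of staying at queue 1 with channel 1 ON. -/
noncomputable def GErate1 (x : GEState × Bool → ℝ) : ℝ :=
  x ((true, true, true), true) + x ((true, true, false), true)

/-- Rate of queue 2: frequency of staying at queue 2 with channel 2 ON. -/
noncomputable def GErate2 (x : GEState × Bool → ℝ) : ℝ :=
  x ((false, true, true), true) + x ((false, false, true), true)

/-- The rate region `Λ_s(p₀₁, p₁₀)`. -/
def GERateRegion (p01 p10 : ℝ) : Set (ℝ × ℝ) :=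
  {r | ∃ x ∈ GEX p01 p10, r = (GErate1 x, GErate2 x)}

section OccupationPolytope

variable {S A : Type*} [Fintype S] [Fintype A]

/-- `P s' s a` is the probability of moving from `s` to `s'` under `a`, as in `GEP`, so that
`GEX p01 p10` is `occupationPolytope (GEP p01 p10)` by definition. -/
def occupationPolytope (P : S → S → A → ℝ) : Set (S × A → ℝ) :=
  {x | (∀ sa, 0 ≤ x sa) ∧ (∑ sa : S × A, x sa) = 1 ∧
    ∀ s : S, (∑ a : A, x (s, a)) = ∑ s' : S, ∑ a : A, P s s' a * x (s', a)}

theorem convex_occupationPolytope (P : S → S → A → ℝ) : Convex ℝ (occupationPolytope P) := by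
  rintro x ⟨hx0, hx1, hxb⟩ y ⟨hy0, hy1, hyb⟩ a b ha hb hab
  refine ⟨fun sa => ?_, ?_, fun s => ?_⟩
  · simp only [Pi.add_apply, Pi.smul_apply, smul_eq_mul]
    exact add_nonneg (mul_nonneg ha (hx0 sa)) (mul_nonneg hb (hy0 sa))
  · simp only [Pi.add_apply, Pi.smul_apply, smul_eq_mul, Finset.sum_add_distrib,
      ← Finset.mul_sum, hx1, hy1, hab, mul_one]
  · simp only [Pi.add_apply, Pi.smul_apply, smul_eq_mul, Finset.sum_add_distrib, mul_add]
    rw [← Finset.mul_sum, ← Finset.mul_sum, hxb s, hyb s]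
    simp only [Finset.mul_sum, mul_left_comm]

theorem sum_mul_le_of_bellman {P : S → S → A → ℝ} {x : S × A → ℝ}
    (hx : x ∈ occupationPolytope P) (r : S × A → ℝ) (g : ℝ) (h : S → ℝ)
    (hb : ∀ s a, r (s, a) + ∑ s', P s' s a * h s' ≤ g + h s) :
    ∑ sa, r sa * x sa ≤ g := by
  obtain ⟨hx0, hx1, hxb⟩ := hx
  have hbalance :
      ∑ sa : S × A, (∑ s', P s' sa.1 sa.2 * h s') * x sa = ∑ sa : S × A, h sa.1 * x sa :=
    calc ∑ sa : S × A, (∑ s', P s' sa.1 sa.2 * h s') * x sa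
        = ∑ s', h s' * ∑ sa : S × A, P s' sa.1 sa.2 * x sa := by
          simp only [Finset.sum_mul, Finset.mul_sum]
          rw [Finset.sum_comm]
          exact Finset.sum_congr rfl fun _ _ => Finset.sum_congr rfl fun _ _ => by ring
      _ = ∑ s', h s' * ∑ a, x (s', a) := by simp only [hxb, Fintype.sum_prod_type]
      _ = ∑ sa : S × A, h sa.1 * x sa := by simp only [Fintype.sum_prod_type, Finset.mul_sum]
  calc ∑ sa, r sa * x sa
      ≤ ∑ sa : S × A, (g + h sa.1 - ∑ s', P s' sa.1 sa.2 * h s') * x sa :=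
        Finset.sum_le_sum fun sa _ =>
          mul_le_mul_of_nonneg_right (by linarith [hb sa.1 sa.2]) (hx0 sa)
    _ = g := by
        simp only [sub_mul, add_mul, Finset.sum_sub_distrib, Finset.sum_add_distrib, hbalance,
          ← Finset.mul_sum, hx1]
        ring

theorem relabel_mem_occupationPolytope {P : S → S → A → ℝ} (e : S ≃ S)
    (he : ∀ s' s a, P (e s') (e s) a = P s' s a) {x : S × A → ℝ}
    (hx : x ∈ occupationPolytope P) : (fun sa => x (e sa.1, sa.2)) ∈ occupationPolytope P := by
  obtain ⟨hx0, hx1, hxb⟩ := hx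
  refine ⟨fun sa => hx0 _, ?_, fun s => ?_⟩
  · rw [← hx1]
    exact (e.prodCongr (Equiv.refl A)).sum_comp x
  · rw [hxb (e s), ← e.sum_comp]
    exact Finset.sum_congr rfl fun t _ => Finset.sum_congr rfl fun a _ => by rw [he]

variable [DecidableEq A]

def policyMeasure (σ : S → A) (μ : S → ℝ) : S × A → ℝ :=
  fun sa => if sa.2 = σ sa.1 then μ sa.1 else 0

theorem policyMeasure_mem_occupationPolytope {P : S → S → A → ℝ} {σ : S → A} {μ : S → ℝ}
    (hμ0 : ∀ s, 0 ≤ μ s) (hμ1 : ∑ s, μ s = 1) (hstat : ∀ s, μ s = ∑ s', P s s' (σ s') * μ s') :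
    policyMeasure σ μ ∈ occupationPolytope P := by
  refine ⟨fun sa => ?_, ?_, fun s => ?_⟩
  · unfold policyMeasure
    split_ifs <;> simp [hμ0]
  · simp [policyMeasure, Fintype.sum_prod_type, hμ1]
  · simp [policyMeasure, mul_ite, ← hstat s]

end OccupationPolytope

section Triangle

variable {𝕜 : Type*} [Field 𝕜] [LinearOrder 𝕜] [IsStrictOrderedRing 𝕜]

theorem Convex.smul_add_smul_mem_of_zero_mem {E : Type*} [AddCommGroup E] [Module 𝕜 E]
    {s : Set E} (hs : Convex 𝕜 s) (h0 : 0 ∈ s) {u v : E} (hu : u ∈ s) (hv : v ∈ s) {a b : 𝕜}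
    (ha : 0 ≤ a) (hb : 0 ≤ b) (hab : a + b ≤ 1) : a • u + b • v ∈ s := by
  have := hs.sum_mem (t := Finset.univ) (w := ![1 - a - b, a, b]) (z := ![0, u, v])
    (fun i _ => by fin_cases i <;> simp [ha, hb]; linarith)
    (by simp [Fin.sum_univ_three]; ring) (fun i _ => by fin_cases i <;> simp [h0, hu, hv])
  simpa [Fin.sum_univ_three] using this

/-- Barycentric coordinates of `r` in the triangle `0, u, v`, whose edge `[u, v]` lies on the line
`α x + β y = c`. -/
theorem exists_triangle_coords {u v r : 𝕜 × 𝕜} (α β c : 𝕜)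
    (hdet : 0 < u.1 * v.2 - u.2 * v.1) (hur : 0 ≤ u.1 * r.2 - u.2 * r.1)
    (hrv : 0 ≤ r.1 * v.2 - r.2 * v.1) (hc : 0 < c) (hu : α * u.1 + β * u.2 = c)
    (hv : α * v.1 + β * v.2 = c) (hr : α * r.1 + β * r.2 ≤ c) :
    ∃ a b : 𝕜, 0 ≤ a ∧ 0 ≤ b ∧ a + b ≤ 1 ∧ r = a • u + b • v := by
  have hd : u.1 * v.2 - u.2 * v.1 ≠ 0 := hdet.ne'
  set a := (r.1 * v.2 - r.2 * v.1) / (u.1 * v.2 - u.2 * v.1)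
  set b := (u.1 * r.2 - u.2 * r.1) / (u.1 * v.2 - u.2 * v.1)
  have hr1 : r.1 = a * u.1 + b * v.1 := by
    rw [div_mul_eq_mul_div, div_mul_eq_mul_div, ← add_div, eq_div_iff hd]; ring
  have hr2 : r.2 = a * u.2 + b * v.2 := by
    rw [div_mul_eq_mul_div, div_mul_eq_mul_div, ← add_div, eq_div_iff hd]; ring
  have hval : α * r.1 + β * r.2 = (a + b) * c := by
    rw [hr1, hr2]; linear_combination a * hu + b * hv
  refine ⟨a, b, div_nonneg hrv hdet.le, div_nonneg hur hdet.le, ?_, Prod.ext ?_ ?_⟩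
  · exact le_of_mul_le_mul_right (by linarith) hc
  · simpa using hr1
  · simpa using hr2

end Triangle

def GEmirror : GEState ≃ GEState where
  toFun s := (!s.1, s.2.2, s.2.1)
  invFun s := (!s.1, s.2.2, s.2.1)
  left_inv s := by simp
  right_inv s := by simp

theorem GEP_mirror (p01 p10 : ℝ) (s' s : GEState) (a : Bool) :
    GEP p01 p10 (GEmirror s') (GEmirror s) a = GEP p01 p10 s' s a := by
  obtain ⟨m', c1', c2'⟩ := s'
  obtain ⟨m, c1, c2⟩ := s
  cases a <;> cases m <;> cases m' <;> simp [GEP, GEmirror, mul_comm]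

theorem GErate1_mirror (x : GEState × Bool → ℝ) :
    GErate1 (fun sa => x (GEmirror sa.1, sa.2)) = GErate2 x := rfl

theorem GErate2_mirror (x : GEState × Bool → ℝ) :
    GErate2 (fun sa => x (GEmirror sa.1, sa.2)) = GErate1 x := rfl

theorem mirror_mem_GEX {p01 p10 : ℝ} {x : GEState × Bool → ℝ} (hx : x ∈ GEX p01 p10) :
    (fun sa => x (GEmirror sa.1, sa.2)) ∈ GEX p01 p10 :=
  relabel_mem_occupationPolytope GEmirror (GEP_mirror p01 p10) hx

theorem swap_mem_GERateRegion {p01 p10 : ℝ} {r : ℝ × ℝ} (hr : r ∈ GERateRegion p01 p10) :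
    r.swap ∈ GERateRegion p01 p10 := by
  obtain ⟨x, hx, rfl⟩ := hr
  exact ⟨_, mirror_mem_GEX hx, rfl⟩

theorem convex_GERateRegion (p01 p10 : ℝ) : Convex ℝ (GERateRegion p01 p10) := by
  rintro _ ⟨x, hx, rfl⟩ _ ⟨y, hy, rfl⟩ a b ha hb hab
  refine ⟨a • x + b • y, convex_occupationPolytope _ hx hy ha hb hab, ?_⟩
  ext <;> simp only [GErate1, GErate2, Prod.smul_mk, Prod.mk_add_mk, Pi.add_apply,
    Pi.smul_apply, smul_eq_mul] <;> ring

def GEreward (w1 w2 : ℝ) : (Bool × Bool × Bool) × Bool → ℝ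
  | ((true, true, _), true) => w1
  | ((false, _, true), true) => w2
  | _ => 0

theorem sum_GEreward_mul (w1 w2 : ℝ) (x : GEState × Bool → ℝ) :
    ∑ sa, GEreward w1 w2 sa * x sa = w1 * GErate1 x + w2 * GErate2 x := by
  simp only [GEreward, GErate1, GErate2, Fintype.sum_prod_type, Fintype.sum_bool, zero_mul,
    add_zero]
  ring

theorem GErate_le_of_bellman {p01 p10 : ℝ} {x : GEState × Bool → ℝ} (hx : x ∈ GEX p01 p10)
    (w1 w2 g : ℝ) (h : GEState → ℝ)
    (hb : ∀ s a, GEreward w1 w2 (s, a) + ∑ s', GEP p01 p10 s' s a * h s' ≤ g + h s) :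
    w1 * GErate1 x + w2 * GErate2 x ≤ g :=
  sum_GEreward_mul w1 w2 x ▸ sum_mul_le_of_bellman hx _ g h hb

def GEh3 (p01 p10 : ℝ) : ℝ := (1 - p10) * (p10 + (p10 + p01) * (1 - p10))

/-- `p₁₀ + p₀₁` times the relative value function of the mirrored myopic policy for the reward
`p₀₁ r₁ + h₃ r₂`. -/
def biasWeighted (p01 p10 : ℝ) : Bool × Bool × Bool → ℝ
  | (true, true, true) => p01 * (p10 + p01) + p10 * (1 - p10) * (1 - p01 - p10) ^ 2
  | (true, true, false) => p01 * (p10 + p01)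
  | (true, false, true) => (1 - p01 - p10) * GEh3 p01 p10
  | (true, false, false) => 0
  | (false, _, true) => GEh3 p01 p10
  | (false, _, false) => 0

theorem bellman_biasWeighted {p01 p10 : ℝ} (h01 : p01 ∈ Set.Ioo (0 : ℝ) 1)
    (h10 : p10 ∈ Set.Ioo (0 : ℝ) 1) (hsum : p01 + p10 ≤ 1)
    (hge : (1 - p10) ^ 2 / (2 - p10) ≤ p01) (s : GEState) (a : Bool) :
    GEreward ((p10 + p01) * p01) ((p10 + p01) * GEh3 p01 p10) (s, a) +
      ∑ s', GEP p01 p10 s' s a * biasWeighted p01 p10 s' ≤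
      p01 * GEh3 p01 p10 + biasWeighted p01 p10 s := by
  obtain ⟨hp, -⟩ := h01
  obtain ⟨hq, hq1⟩ := h10
  have hρ : 0 ≤ 1 - p01 - p10 := by linarith
  have hq' : 0 ≤ 1 - p10 := by linarith
  have hq'' : 0 ≤ 2 - p10 := by linarith
  have hge' : 0 ≤ p01 * (2 - p10) - (1 - p10) ^ 2 := by
    rw [div_le_iff₀ (by linarith)] at hge; linarith
  -- `p₁₀ + p₀₁` times the slacks of the Bellman inequalities that are not tight
  have s1 : 0 ≤ (p10 + p01) * (p01 * (2 - p10) - (1 - p10) ^ 2) := by positivity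
  have s2 : 0 ≤ (p10 + p01) * p01 := by positivity
  have s3 : 0 ≤ (p10 + p01) * (1 - p01 - p10) *
      (p10 * (1 - p10) * (2 - p10) + p01 * (1 + (1 - p10) ^ 2)) := by positivity
  have s4 : 0 ≤ (p10 + p01) * p01 * (1 - p01 - p10) * (p01 * (1 - p10) + p10 * (2 - p10)) := by
    positivity
  have s5 : 0 ≤ (p10 + p01) * (1 - p10) * (1 + p10 * (1 - p01 - p10)) := by positivity
  have s6 : 0 ≤ (p10 + p01) * (p01 * (1 - p01 - p10) * (1 + (1 - p10) ^ 2) +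
      p01 * (1 - 2 * p10) ^ 2 + p10 ^ 3 * (1 - p01 - p10) + 4 * p10 * (1 - p10) ^ 2) := by
    positivity
  obtain ⟨m, c1, c2⟩ := s
  cases m <;> cases c1 <;> cases c2 <;> cases a <;>
    simp only [GEP, chTrans, GEreward, biasWeighted, GEh3, Fintype.sum_prod_type,
      Fintype.sum_bool, ↓reduceIte, Bool.not_true, Bool.not_false, Bool.false_eq_true,
      Bool.true_eq_false, one_mul, mul_zero, zero_mul, add_zero, zero_add] <;>
    linarith

theorem weighted_GErate_le {p01 p10 : ℝ} (h01 : p01 ∈ Set.Ioo (0 : ℝ) 1)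
    (h10 : p10 ∈ Set.Ioo (0 : ℝ) 1) (hsum : p01 + p10 ≤ 1)
    (hge : (1 - p10) ^ 2 / (2 - p10) ≤ p01) {x : GEState × Bool → ℝ} (hx : x ∈ GEX p01 p10) :
    p01 * GErate1 x + GEh3 p01 p10 * GErate2 x ≤ GEh3 p01 p10 * (p01 / (p10 + p01)) := by
  have hpq : 0 < p10 + p01 := by linarith [h01.1, h10.1]
  have := GErate_le_of_bellman hx _ _ _ _ (bellman_biasWeighted h01 h10 hsum hge)
  rw [mul_div_assoc', le_div_iff₀ hpq]
  linarith

/-- `(2 - p₀₁ - p₁₀) (p₁₀ + p₀₁)²` times the relative value function of the myopic policy for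
the reward `r₁ + r₂`, as a function of the channel at the server and the other channel. -/
def biasTotalAux (p01 p10 : ℝ) : Bool → Bool → ℝ
  | true, true => (2 - p01 - p10) * (p10 + p01) ^ 2 +
      (1 - p01 - p10) * (p01 * (1 - p10) + p10 * (2 - p10)) + p10 * (1 - p01 - p10) ^ 2
  | true, false => (2 - p01 - p10) * (p10 + p01) ^ 2 +
      (1 - p01 - p10) * (p01 * (1 - p10) + p10 * (2 - p10))
  | false, true => (1 - p01 - p10) * (p01 * (1 - p10) + p10 * (2 - p10))
  | false, false => 0

def biasTotal (p01 p10 : ℝ) : Bool × Bool × Bool → ℝ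
  | (true, c1, c2) => biasTotalAux p01 p10 c1 c2
  | (false, c1, c2) => biasTotalAux p01 p10 c2 c1

theorem bellman_biasTotal {p01 p10 : ℝ} (h01 : p01 ∈ Set.Ioo (0 : ℝ) 1)
    (h10 : p10 ∈ Set.Ioo (0 : ℝ) 1) (hsum : p01 + p10 ≤ 1) (s : GEState) (a : Bool) :
    GEreward ((2 - p01 - p10) * (p10 + p01) ^ 2) ((2 - p01 - p10) * (p10 + p01) ^ 2) (s, a) +
      ∑ s', GEP p01 p10 s' s a * biasTotal p01 p10 s' ≤
      (2 - p01 - p10) * p01 * (p01 * (1 - p10) + p10 * (2 - p10)) + biasTotal p01 p10 s := by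
  obtain ⟨hp, -⟩ := h01
  obtain ⟨hq, -⟩ := h10
  have hρ : 0 ≤ 1 - p01 - p10 := by linarith
  have hρ' : 0 ≤ 2 - p01 - p10 := by linarith
  -- the non-zero slacks are `1`, `2 - p₀₁ - p₁₀` and `1 - p₀₁ - p₁₀`, up to the scaling factor
  have s1 : 0 ≤ (2 - p01 - p10) * (p10 + p01) ^ 2 := by positivity
  have s2 : 0 ≤ (2 - p01 - p10) * (p10 + p01) ^ 2 * (2 - p01 - p10) := by positivity
  have s3 : 0 ≤ (2 - p01 - p10) * (p10 + p01) ^ 2 * (1 - p01 - p10) := by positivity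
  obtain ⟨m, c1, c2⟩ := s
  cases m <;> cases c1 <;> cases c2 <;> cases a <;>
    simp only [GEP, chTrans, GEreward, biasTotal, biasTotalAux, Fintype.sum_prod_type,
      Fintype.sum_bool, ↓reduceIte, Bool.not_true, Bool.not_false, Bool.false_eq_true,
      Bool.true_eq_false, one_mul, mul_zero, zero_mul, add_zero, zero_add] <;>
    linarith

theorem GErate1_add_GErate2_le {p01 p10 : ℝ} (h01 : p01 ∈ Set.Ioo (0 : ℝ) 1)
    (h10 : p10 ∈ Set.Ioo (0 : ℝ) 1) (hsum : p01 + p10 ≤ 1)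
    {x : GEState × Bool → ℝ} (hx : x ∈ GEX p01 p10) :
    GErate1 x + GErate2 x ≤ 1 - p10 ^ 2 / (p10 + p01) ^ 2 - p10 * p01 / (p01 + p10) := by
  have hpq : 0 < p10 + p01 := by linarith [h01.1, h10.1]
  have hpq' : p01 + p10 ≠ 0 := by linarith
  have hρ' : 0 < 2 - p01 - p10 := by linarith [h01.2, h10.2]
  have := GErate_le_of_bellman hx _ _ _ _ (bellman_biasTotal h01 h10 hsum)
  have hB : 1 - p10 ^ 2 / (p10 + p01) ^ 2 - p10 * p01 / (p01 + p10) =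
      p01 * (p01 * (1 - p10) + p10 * (2 - p10)) / (p10 + p01) ^ 2 := by
    field_simp; ring
  rw [hB, le_div_iff₀ (by positivity)]
  nlinarith

noncomputable def channelStationary (p01 p10 : ℝ) : Bool → ℝ
  | true => p01 / (p10 + p01)
  | false => p10 / (p10 + p01)

noncomputable def alwaysSwitch (p01 p10 : ℝ) : GEState × Bool → ℝ :=
  policyMeasure (fun _ => false) fun s =>
    channelStationary p01 p10 s.2.1 * channelStationary p01 p10 s.2.2 / 2

noncomputable def alwaysStayAtOne (p01 p10 : ℝ) : GEState × Bool → ℝ :=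
  policyMeasure (fun _ => true) fun s =>
    if s.1 then channelStationary p01 p10 s.2.1 * channelStationary p01 p10 s.2.2 else 0

theorem zero_mem_GERateRegion {p01 p10 : ℝ} (h01 : p01 ∈ Set.Ioo (0 : ℝ) 1)
    (h10 : p10 ∈ Set.Ioo (0 : ℝ) 1) : (0 : ℝ × ℝ) ∈ GERateRegion p01 p10 := by
  obtain ⟨hp, -⟩ := h01
  obtain ⟨hq, -⟩ := h10
  have hpq : p10 + p01 ≠ 0 := by linarith
  refine ⟨alwaysSwitch p01 p10, policyMeasure_mem_occupationPolytope
    (fun ⟨m, c1, c2⟩ => ?_) ?_ fun ⟨m, c1, c2⟩ => ?_, ?_⟩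
  · cases c1 <;> cases c2 <;> simp only [channelStationary] <;> positivity
  · simp only [channelStationary, Fintype.sum_prod_type, Fintype.sum_bool]
    field_simp; ring
  · cases m <;> cases c1 <;> cases c2 <;>
      simp only [channelStationary, GEP, chTrans, Fintype.sum_prod_type, Fintype.sum_bool,
        ↓reduceIte, Bool.not_true, Bool.not_false, Bool.false_eq_true, Bool.true_eq_false, one_mul,
        zero_mul, add_zero, zero_add] <;>
      field_simp <;> ring
  · simp [alwaysSwitch, policyMeasure, GErate1, GErate2, Prod.zero_eq_mk]

theorem stayAtOne_mem_GERateRegion {p01 p10 : ℝ} (h01 : p01 ∈ Set.Ioo (0 : ℝ) 1)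
    (h10 : p10 ∈ Set.Ioo (0 : ℝ) 1) : (p01 / (p10 + p01), (0 : ℝ)) ∈ GERateRegion p01 p10 := by
  obtain ⟨hp, -⟩ := h01
  obtain ⟨hq, -⟩ := h10
  have hpq : p10 + p01 ≠ 0 := by linarith
  refine ⟨alwaysStayAtOne p01 p10, policyMeasure_mem_occupationPolytope
    (fun ⟨m, c1, c2⟩ => ?_) ?_ fun ⟨m, c1, c2⟩ => ?_, ?_⟩
  · cases m <;> cases c1 <;> cases c2 <;>
      simp only [channelStationary, ↓reduceIte, Bool.false_eq_true, le_refl] <;> positivity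
  · simp only [channelStationary, Fintype.sum_prod_type, Fintype.sum_bool, ↓reduceIte,
      Bool.false_eq_true, add_zero]
    field_simp; ring
  · cases m <;> cases c1 <;> cases c2 <;>
      simp only [channelStationary, GEP, chTrans, Fintype.sum_prod_type, Fintype.sum_bool,
        ↓reduceIte, Bool.false_eq_true, Bool.true_eq_false, one_mul, mul_zero, zero_mul,
        add_zero] <;>
      field_simp <;> ring
  · simp only [alwaysStayAtOne, policyMeasure, GErate1, GErate2, channelStationary, ↓reduceIte,
      Bool.false_eq_true, add_zero, Prod.mk.injEq, and_true]
    field_simp; ring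

/-- Stay while the current channel is ON; otherwise go to the queue whose channel is ON,
and to queue 1 if both are OFF. -/
def myopicPolicy : GEState → Bool
  | (true, c1, c2) => c1 || !c2
  | (false, _, c2) => c2

def myopicWeight (p01 p10 : ℝ) : Bool × Bool × Bool → ℝ
  | (true, true, true) => p01 ^ 2
  | (true, true, false) => p01 * p10 * ((1 - p01) * (2 - p10) + p01 * (1 - p10))
  | (true, false, true) => p01 * p10 * (p10 * (2 - p10) + p01 * (1 - p10))
  | (true, false, false) => p10 ^ 2 * ((1 - p01) * (2 - p10) + p01 ^ 2)
  | (false, true, true) => p01 ^ 2 * (1 - p10)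
  | (false, true, false) => p01 ^ 2 * p10
  | (false, false, true) => p01 * p10 * (1 - p10) * (2 - p01 - p10)
  | (false, false, false) => p01 * p10 ^ 2 * (2 - p01 - p10)

noncomputable def myopicOccupation (p01 p10 : ℝ) : GEState × Bool → ℝ :=
  policyMeasure myopicPolicy fun s => myopicWeight p01 p10 s / ((p10 + p01) ^ 2 * (2 - p10))

theorem myopicOccupation_mem_GEX {p01 p10 : ℝ} (h01 : p01 ∈ Set.Ioo (0 : ℝ) 1)
    (h10 : p10 ∈ Set.Ioo (0 : ℝ) 1) : myopicOccupation p01 p10 ∈ GEX p01 p10 := by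
  obtain ⟨hp, hp1⟩ := h01
  obtain ⟨hq, hq1⟩ := h10
  have hpq : p10 + p01 ≠ 0 := by linarith
  have hq'' : 2 - p10 ≠ 0 := by linarith
  refine policyMeasure_mem_occupationPolytope (fun ⟨m, c1, c2⟩ => ?_) ?_ fun ⟨m, c1, c2⟩ => ?_
  · have : 0 ≤ 1 - p01 := by linarith
    have : 0 ≤ 1 - p10 := by linarith
    have : 0 ≤ 2 - p10 := by linarith
    have : 0 ≤ 2 - p01 - p10 := by linarith
    cases m <;> cases c1 <;> cases c2 <;> simp only [myopicWeight] <;> positivity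
  · simp only [myopicWeight, Fintype.sum_prod_type, Fintype.sum_bool]
    field_simp; ring
  · cases m <;> cases c1 <;> cases c2 <;>
      simp only [myopicWeight, myopicPolicy, GEP, chTrans, Bool.or_true, Bool.or_false,
        Fintype.sum_prod_type, Fintype.sum_bool, ↓reduceIte, Bool.not_true, Bool.not_false,
        Bool.false_eq_true, Bool.true_eq_false, one_mul, zero_mul, add_zero, zero_add] <;>
      field_simp <;> ring

noncomputable def myopicRates (p01 p10 : ℝ) : ℝ × ℝ :=
  (GErate1 (myopicOccupation p01 p10), GErate2 (myopicOccupation p01 p10))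

theorem myopicRates_mem_GERateRegion {p01 p10 : ℝ} (h01 : p01 ∈ Set.Ioo (0 : ℝ) 1)
    (h10 : p10 ∈ Set.Ioo (0 : ℝ) 1) : myopicRates p01 p10 ∈ GERateRegion p01 p10 :=
  ⟨_, myopicOccupation_mem_GEX h01 h10, rfl⟩

theorem myopicRates_eq (p01 p10 : ℝ) :
    myopicRates p01 p10 =
      ((p01 ^ 2 + p01 * p10 * ((1 - p01) * (2 - p10) + p01 * (1 - p10))) /
          ((p10 + p01) ^ 2 * (2 - p10)),
        (p01 ^ 2 * (1 - p10) + p01 * p10 * (1 - p10) * (2 - p01 - p10)) /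
          ((p10 + p01) ^ 2 * (2 - p10))) := by
  simp [myopicRates, myopicOccupation, policyMeasure, myopicPolicy, myopicWeight, GErate1,
    GErate2, add_div]

theorem myopicRates_snd_pos {p01 p10 : ℝ} (h01 : p01 ∈ Set.Ioo (0 : ℝ) 1)
    (h10 : p10 ∈ Set.Ioo (0 : ℝ) 1) : 0 < (myopicRates p01 p10).2 := by
  obtain ⟨hp, hp1⟩ := h01
  obtain ⟨hq, hq1⟩ := h10
  have : 0 < 1 - p10 := by linarith
  have : 0 < 2 - p01 - p10 := by linarith
  have : 0 < 2 - p10 := by linarith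
  rw [myopicRates_eq]
  positivity

theorem myopicRates_snd_lt_fst {p01 p10 : ℝ} (h01 : p01 ∈ Set.Ioo (0 : ℝ) 1)
    (h10 : p10 ∈ Set.Ioo (0 : ℝ) 1) : (myopicRates p01 p10).2 < (myopicRates p01 p10).1 := by
  obtain ⟨hp, -⟩ := h01
  obtain ⟨hq, hq1⟩ := h10
  have hq' : 0 < 1 - p10 := by linarith
  have hq'' : 0 < 2 - p10 := by linarith
  rw [myopicRates_eq]
  refine div_lt_div_of_pos_right ?_ (by positivity)
  nlinarith [mul_pos (mul_pos hp hq) (add_pos (mul_pos hq hq'') (mul_pos hp hq'))]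

theorem myopicRates_weighted_eq {p01 p10 : ℝ} (h01 : p01 ∈ Set.Ioo (0 : ℝ) 1)
    (h10 : p10 ∈ Set.Ioo (0 : ℝ) 1) :
    GEh3 p01 p10 * (myopicRates p01 p10).1 + p01 * (myopicRates p01 p10).2 =
      GEh3 p01 p10 * (p01 / (p10 + p01)) := by
  have hpq : p10 + p01 ≠ 0 := by linarith [h01.1, h10.1]
  have hq'' : 2 - p10 ≠ 0 := by linarith [h10.2]
  rw [myopicRates_eq, GEh3]
  field_simp
  ring

theorem myopicRates_total_eq {p01 p10 : ℝ} (h01 : p01 ∈ Set.Ioo (0 : ℝ) 1)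
    (h10 : p10 ∈ Set.Ioo (0 : ℝ) 1) :
    (myopicRates p01 p10).1 + (myopicRates p01 p10).2 =
      1 - p10 ^ 2 / (p10 + p01) ^ 2 - p10 * p01 / (p01 + p10) := by
  have hpq : p10 + p01 ≠ 0 := by linarith [h01.1, h10.1]
  have hpq' : p01 + p10 ≠ 0 := by linarith [h01.1, h10.1]
  have hq'' : 2 - p10 ≠ 0 := by linarith [h10.2]
  rw [myopicRates_eq]
  field_simp
  ring

def GEPolygon (p01 p10 : ℝ) : Set (ℝ × ℝ) :=
  {r | 0 ≤ r.1 ∧ 0 ≤ r.2 ∧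
    p01 * r.1 + GEh3 p01 p10 * r.2 ≤ GEh3 p01 p10 * (p01 / (p10 + p01)) ∧
    r.1 + r.2 ≤ 1 - p10 ^ 2 / (p10 + p01) ^ 2 - p10 * p01 / (p01 + p10) ∧
    GEh3 p01 p10 * r.1 + p01 * r.2 ≤ GEh3 p01 p10 * (p01 / (p10 + p01))}

theorem swap_mem_GEPolygon {p01 p10 : ℝ} {r : ℝ × ℝ} (hr : r ∈ GEPolygon p01 p10) :
    r.swap ∈ GEPolygon p01 p10 := by
  obtain ⟨h1, h2, hA, hB, hC⟩ := hr
  refine ⟨h2, h1, ?_, ?_, ?_⟩ <;> simp only [Prod.fst_swap, Prod.snd_swap] <;> linarith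

theorem GERateRegion_subset_GEPolygon {p01 p10 : ℝ} (h01 : p01 ∈ Set.Ioo (0 : ℝ) 1)
    (h10 : p10 ∈ Set.Ioo (0 : ℝ) 1) (hsum : p01 + p10 ≤ 1)
    (hge : (1 - p10) ^ 2 / (2 - p10) ≤ p01) : GERateRegion p01 p10 ⊆ GEPolygon p01 p10 := by
  rintro _ ⟨x, hx, rfl⟩
  have hmirror := weighted_GErate_le h01 h10 hsum hge (mirror_mem_GEX hx)
  rw [GErate1_mirror, GErate2_mirror] at hmirror
  exact ⟨add_nonneg (hx.1 _) (hx.1 _), add_nonneg (hx.1 _) (hx.1 _),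
    weighted_GErate_le h01 h10 hsum hge hx, GErate1_add_GErate2_le h01 h10 hsum hx,
    by linarith⟩

theorem GEPolygon_subset_GERateRegion {p01 p10 : ℝ} (h01 : p01 ∈ Set.Ioo (0 : ℝ) 1)
    (h10 : p10 ∈ Set.Ioo (0 : ℝ) 1) : GEPolygon p01 p10 ⊆ GERateRegion p01 p10 := by
  intro r hr
  wlog hr21 : r.2 ≤ r.1 generalizing r
  · simpa using swap_mem_GERateRegion (this (swap_mem_GEPolygon hr) (by simp; linarith))
  obtain ⟨hr1, hr2, -, hB, hC⟩ := hr
  have hp := h01.1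
  have hq := h10.1
  have hq' : 0 < 1 - p10 := by linarith [h10.2]
  have hh3 : 0 < GEh3 p01 p10 := by unfold GEh3; positivity
  have hπ : 0 < p01 / (p10 + p01) := by positivity
  have hv2 := myopicRates_snd_pos h01 h10
  have hv21 := myopicRates_snd_lt_fst h01 h10
  have hvW := myopicRates_weighted_eq h01 h10
  have hvB := myopicRates_total_eq h01 h10
  have hv := myopicRates_mem_GERateRegion h01 h10
  set v := myopicRates p01 p10
  have hconv := convex_GERateRegion p01 p10
  have h0 := zero_mem_GERateRegion h01 h10
  rcases le_or_gt (r.2 * v.1) (r.1 * v.2) with hbelow | habove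
  · obtain ⟨a, b, ha, hb, hab, rfl⟩ := exists_triangle_coords (u := (p01 / (p10 + p01), 0))
      (v := v) (r := r) (GEh3 p01 p10) p01 (GEh3 p01 p10 * (p01 / (p10 + p01)))
      (by simp; positivity) (by simp; positivity) (by linarith) (by positivity) (by simp) hvW hC
    exact hconv.smul_add_smul_mem_of_zero_mem h0 (stayAtOne_mem_GERateRegion h01 h10) hv ha hb hab
  · obtain ⟨a, b, ha, hb, hab, rfl⟩ := exists_triangle_coords (u := v) (v := v.swap) (r := r) 1 1
      (v.1 + v.2) (by simp; nlinarith) (by linarith) (by simp; nlinarith) (by linarith)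
      (by simp) (by simp [add_comm]) (by linarith)
    exact hconv.smul_add_smul_mem_of_zero_mem h0 hv (swap_mem_GERateRegion hv) ha hb hab

/-- For `p₀₁, p₁₀ ∈ (0,1)` with `p₀₁ + p₁₀ ≤ 1` and `p₀₁ ≥ (1-p₁₀)²/(2-p₁₀)`, the rate
region `Λ_s(p₀₁, p₁₀)` is the set of nonnegative pairs `(r₁, r₂)` satisfying the three
stated inequalities, where `h₃ = (1-p₁₀)(p₁₀ + (p₁₀+p₀₁)(1-p₁₀))`. -/
theorem rate_region_eq_nonsymmetric_ge (p01 p10 : ℝ)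
    (h01 : p01 ∈ Set.Ioo (0 : ℝ) 1) (h10 : p10 ∈ Set.Ioo (0 : ℝ) 1)
    (hsum : p01 + p10 ≤ 1) (hge : (1 - p10) ^ 2 / (2 - p10) ≤ p01) :
    GERateRegion p01 p10 =
      {r : ℝ × ℝ | 0 ≤ r.1 ∧ 0 ≤ r.2 ∧
        p01 * r.1 + (1 - p10) * (p10 + (p10 + p01) * (1 - p10)) * r.2 ≤
          (1 - p10) * (p10 + (p10 + p01) * (1 - p10)) * (p01 / (p10 + p01)) ∧
        r.1 + r.2 ≤ 1 - p10 ^ 2 / (p10 + p01) ^ 2 - p10 * p01 / (p01 + p10) ∧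
        (1 - p10) * (p10 + (p10 + p01) * (1 - p10)) * r.1 + p01 * r.2 ≤
          (1 - p10) * (p10 + (p10 + p01) * (1 - p10)) * (p01 / (p10 + p01))} :=
  (GERateRegion_subset_GEPolygon h01 h10 hsum hge).antisymm
    (GEPolygon_subset_GERateRegion h01 h10)
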